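/- (Any learner with few parameters fails to learn subsampled inner products.) Let α, k, ℓ, n, r₁, r₂, β ∈ ℕ and η ≥ 0. Let Enc: 𝔽_{2^ℓ}^k → 𝔽_{2^ℓ}ⁿ be the Reed–Solomon encoding with dimension k and block length n ≤ 2^ℓ. Let samp₁: {0,1}^{r₁} → (size-kℓ subsets of {1,…,α}) be a function such that for every distribution X on {0,1}^α with H_∞(X) ≥ α/4 there exists a distribution Y on {0,1}^{kℓ} with H_∞(Y) ≥ kℓ/5 and SD((u₁, X|_{samp₁(u₁)}), (u₁, Y)) ≤ η, where u₁ is uniform on {0,1}^{r₁}. Fix an arbitrary string Q ∈ {0,1}^β, an arbitrary function samp₂: {0,1}^{r₂} → (size-nℓ subsets of {1,…,β}), and arbitrary injective encodings [·] of u₁ and u₂. Let P be uniformly distributed on {0,1}^α, and define the example distribution: sample u₁ ← {0,1}^{r₁}, u₂ ← {0,1}^{r₂}, m ← 𝔽_{2^ℓ}^k independently and uniformly; set the instance x = ([u₁], [u₂], m, Enc(m) + Q|_{samp₂(u₂)}) (additions coordinatewise in 𝔽_{2^ℓ}, with Q|_{samp₂(u₂)} read as a vector in 𝔽_{2^ℓ}ⁿ)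 and the label y = ⟨m, P|_{samp₁(u₁)}⟩ computed over 𝔽₂ with m read as a kℓ-bit string. Let Z be any random variable jointly distributed with P whose support has size at most 2^{α/2} (e.g., the model output by an arbitrary learner given arbitrarily many labeled examples), and for each value z let f_z be any classifier. Then for a fresh example (x, y) drawn from this distribution independently of Z conditioned on P: Pr[ f_Z(x) = y ] ≤ 1/2 + 2^{−α/4} + η + 2^{−kℓ/10}. -/

import Mathlib

/-!
Condition on the model `b`. Models of probability below `2^(-3α/4)` are at most `2^(α/2)` in
number, so together they carry mass at most `2^(-α/4)`. Conditioned on any other model the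
uniform key `P` keeps min-entropy `α/4`, so the sampler property replaces
`(u₁, P|_{samp₁ u₁})` by `(u₁, v)` with `v ∼ Y` independent of `u₁` and of min-entropy `kℓ/5`,
at cost `η`. Once `u₁, u₂` are fixed the classifier is a function `g` of the uniform message
`m`, and the label is `⟨m, v⟩`. The advantage of `g` is `∑ᵥ Y(v) ĝ(v)`, where `ĝ` is the
Walsh–Fourier transform of `(-1)^g`; Parseval (`∑ ĝ² = 1`) and Cauchy–Schwarz bound it by the
square root of the collision probability `∑ Y(v)² ≤ 2^(-kℓ/5)`.
-/

open Finset

/-- Statistical distance between two (mass functions of) distributions on a finite set. -/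
noncomputable def SD {Ω : Type*} [Fintype Ω] (p q : Ω → ℝ) : ℝ :=
  (∑ ω, |p ω - q ω|) / 2

/-- Min-entropy of a distribution on a finite set: `-log₂ (max_ω p ω)`. -/
noncomputable def minEntropy {Ω : Type*} [Fintype Ω] (p : Ω → ℝ) : ℝ :=
  - Real.logb 2 (⨆ ω, p ω)

/-- Inner product over 𝔽₂. -/
def ip {N : ℕ} (x y : Fin N → ZMod 2) : ZMod 2 := ∑ i, x i * y i

/-- Restriction `x|_S` of a string `x ∈ {0,1}^N` to a subset `S` of size `t`, listing the
coordinates of `S` in increasing order. -/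
def restrict {N t : ℕ} (x : Fin N → ZMod 2) (S : Finset (Fin N)) (h : S.card = t) :
    Fin t → ZMod 2 :=
  fun j => x ((S.orderIsoOfFin h j : Fin N))

/-- Reed–Solomon encoding with dimension `k`, block length `n` and (distinct)
evaluation points `a : Fin n → F`:  `m ↦ (f_m(a₁), …, f_m(a_n))`. -/
def rsEnc {F : Type*} [Field F] (k n : ℕ) (a : Fin n → F) (m : Fin k → F) : Fin n → F :=
  fun i => ∑ j : Fin k, m j * a i ^ (j : ℕ)

/-- Reading an `n·ℓ`-bit string as a vector in `𝔽_{2^ℓ}ⁿ`, via a fixed identification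
`toF` of `{0,1}^ℓ` with the field. -/
def vecOf {F : Type*} (ℓ n : ℕ) (toF : (Fin ℓ → ZMod 2) ≃ F)
    (y : Fin (n * ℓ) → ZMod 2) : Fin n → F :=
  fun i => toF (fun b => y (finProdFinEquiv (i, b)))

/-- Reading a vector `m ∈ F^k` as a `k·ℓ`-bit string, via a fixed identification `toF`
of `{0,1}^ℓ` with the field. -/
def bitsOf {F : Type*} (ℓ k : ℕ) (toF : (Fin ℓ → ZMod 2) ≃ F)
    (m : Fin k → F) : Fin (k * ℓ) → ZMod 2 :=
  fun j => toF.symm (m (finProdFinEquiv.symm j).1) (finProdFinEquiv.symm j).2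


open scoped BigOperators

lemma ZMod.eq_zero_or_eq_one (x : ZMod 2) : x = 0 ∨ x = 1 := by
  revert x; decide

def signChar : AddChar (ZMod 2) ℝ where
  toFun x := if x = 0 then 1 else -1
  map_zero_eq_one' := if_pos rfl
  map_add_eq_mul' x y := by
    rcases ZMod.eq_zero_or_eq_one x with rfl | rfl <;>
      rcases ZMod.eq_zero_or_eq_one y with rfl | rfl <;> simp [CharTwo.add_self_eq_zero]

lemma signChar_one : signChar 1 = -1 := by simp [signChar]

lemma signChar_mul_self (x : ZMod 2) : signChar x * signChar x = 1 := by
  rw [← AddChar.map_add_eq_mul, CharTwo.add_self_eq_zero, AddChar.map_zero_eq_one]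

lemma ite_eq_eq_signChar (x y : ZMod 2) :
    (if x = y then (1 : ℝ) else 0) = (1 + signChar x * signChar y) / 2 := by
  rcases ZMod.eq_zero_or_eq_one x with rfl | rfl <;>
    rcases ZMod.eq_zero_or_eq_one y with rfl | rfl <;> norm_num [signChar_one]

lemma card_bitString (N : ℕ) : Fintype.card (Fin N → ZMod 2) = 2 ^ N := by simp

lemma ip_add_left {N : ℕ} (s t v : Fin N → ZMod 2) : ip (s + t) v = ip s v + ip t v := by
  simp only [ip, Pi.add_apply, add_mul, sum_add_distrib]

lemma signChar_ip {N : ℕ} (w v : Fin N → ZMod 2) :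
    signChar (ip w v) = ∏ i, signChar (w i * v i) := by
  rw [ip, ← toAdd_ofAdd (∑ i, _), ofAdd_sum, ← AddChar.toMonoidHom_apply, map_prod]
  rfl

lemma sum_signChar_ip {N : ℕ} (w : Fin N → ZMod 2) :
    ∑ v, signChar (ip w v) = if w = 0 then 2 ^ N else 0 := by
  have hcoord (x : ZMod 2) : ∑ y, signChar (x * y) = if x = 0 then 2 else 0 := by
    rcases ZMod.eq_zero_or_eq_one x with rfl | rfl
    · simp
    · simpa using AddChar.sum_eq_zero_iff_ne_zero.2
        (AddChar.ne_zero_iff.2 ⟨1, by norm_num [signChar_one]⟩)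
  calc ∑ v, signChar (ip w v) = ∏ i, ∑ y, signChar (w i * y) := by
        simp_rw [signChar_ip]
        exact (Fintype.prod_sum fun i (y : ZMod 2) => signChar (w i * y)).symm
    _ = _ := by simp_rw [hcoord, prod_ite_zero, funext_iff]; simp

lemma sum_signChar_ip_mul_signChar_ip {N : ℕ} (s t : Fin N → ZMod 2) :
    ∑ v, signChar (ip s v) * signChar (ip t v) = if s = t then 2 ^ N else 0 := by
  have hst : s + t = 0 ↔ s = t := by
    rw [add_eq_zero_iff_eq_neg, show -t = t from funext fun i => ZMod.neg_eq_self_mod_two (t i)]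
  simp_rw [← AddChar.map_add_eq_mul, ← ip_add_left, sum_signChar_ip, hst]

/-- Parseval's identity for the Walsh–Fourier transform. -/
lemma sum_sq_sum_mul_signChar_ip {N : ℕ} (h : (Fin N → ZMod 2) → ℝ) :
    ∑ v, (∑ s, h s * signChar (ip s v)) ^ 2 = 2 ^ N * ∑ s, h s ^ 2 := by
  calc ∑ v, (∑ s, h s * signChar (ip s v)) ^ 2
      = ∑ s, ∑ t, h s * h t * ∑ v, signChar (ip s v) * signChar (ip t v) := by
        simp_rw [sq, sum_mul_sum, mul_sum]
        rw [sum_comm]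
        refine sum_congr rfl fun s _ => ?_
        rw [sum_comm]
        exact sum_congr rfl fun t _ => sum_congr rfl fun v _ => by ring
    _ = 2 ^ N * ∑ s, h s ^ 2 := by
        simp_rw [sum_signChar_ip_mul_signChar_ip, mul_ite, mul_zero, sum_ite_eq, mem_univ,
          if_true, mul_sum, sq]
        exact sum_congr rfl fun s _ => by ring

lemma sum_sq_expect_mul_signChar_ip {N : ℕ} (h : (Fin N → ZMod 2) → ℝ) :
    ∑ v, (𝔼 s, h s * signChar (ip s v)) ^ 2 = 𝔼 s, h s ^ 2 := by
  simp_rw [Fintype.expect_eq_sum_div_card, card_bitString, div_pow, ← sum_div,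
    sum_sq_sum_mul_signChar_ip]
  push_cast
  field_simp

noncomputable def agreement {N : ℕ} (g : (Fin N → ZMod 2) → ZMod 2) (v : Fin N → ZMod 2) : ℝ :=
  𝔼 s, if g s = ip s v then 1 else 0

lemma agreement_nonneg {N : ℕ} (g : (Fin N → ZMod 2) → ZMod 2) (v : Fin N → ZMod 2) :
    0 ≤ agreement g v :=
  expect_nonneg fun _ _ => by positivity

lemma agreement_le_one {N : ℕ} (g : (Fin N → ZMod 2) → ZMod 2) (v : Fin N → ZMod 2) :
    agreement g v ≤ 1 :=
  expect_le univ_nonempty fun _ _ => by split_ifs <;> norm_num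

lemma agreement_eq {N : ℕ} (g : (Fin N → ZMod 2) → ZMod 2) (v : Fin N → ZMod 2) :
    agreement g v = 1 / 2 + (𝔼 s, signChar (g s) * signChar (ip s v)) / 2 := by
  simp_rw [agreement, ite_eq_eq_signChar, ← expect_div, expect_add_distrib]
  rw [Fintype.expect_const]
  ring

lemma agreement_eq_expect_comp_equiv {M : Type*} [Fintype M] {N : ℕ}
    (e : M ≃ (Fin N → ZMod 2)) (g : (Fin N → ZMod 2) → ZMod 2) (v : Fin N → ZMod 2) :
    agreement g v = 𝔼 m, if g (e m) = ip (e m) v then 1 else 0 :=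
  (Fintype.expect_equiv e _ _ fun _ => rfl).symm

lemma sum_mul_agreement_le {N : ℕ} (g : (Fin N → ZMod 2) → ZMod 2)
    (Y : (Fin N → ZMod 2) → ℝ) (hY : ∑ v, Y v = 1) :
    ∑ v, Y v * agreement g v ≤ 1 / 2 + √(∑ v, Y v ^ 2) / 2 := by
  set bias := fun v => 𝔼 s, signChar (g s) * signChar (ip s v)
  have hbias : ∑ v, bias v ^ 2 = 1 := by
    rw [sum_sq_expect_mul_signChar_ip]
    simp [sq, signChar_mul_self]
  calc ∑ v, Y v * agreement g v = 1 / 2 + (∑ v, Y v * bias v) / 2 := by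
        simp_rw [agreement_eq, mul_add, sum_add_distrib, ← sum_mul, hY, mul_div_assoc', ← sum_div]
        ring
    _ ≤ 1 / 2 + √(∑ v, Y v ^ 2) * √(∑ v, bias v ^ 2) / 2 := by
        gcongr
        exact Real.sum_mul_le_sqrt_mul_sqrt _ _ _
    _ = 1 / 2 + √(∑ v, Y v ^ 2) / 2 := by rw [hbias, Real.sqrt_one, mul_one]

lemma le_minEntropy_of_forall_le {Ω : Type*} [Fintype Ω] {X : Ω → ℝ} {c : ℝ}
    (hpos : ∃ x, 0 < X x) (h : ∀ x, X x ≤ 2 ^ (-c)) : c ≤ minEntropy X := by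
  obtain ⟨x₀, hx₀⟩ := hpos
  have : Nonempty Ω := ⟨x₀⟩
  have hmax : 0 < ⨆ x, X x := hx₀.trans_le (le_ciSup (Set.finite_range X).bddAbove x₀)
  have := (Real.logb_le_iff_le_rpow one_lt_two hmax).2 (ciSup_le h)
  rw [minEntropy]
  linarith

lemma le_rpow_neg_of_le_minEntropy {Ω : Type*} [Fintype Ω] {Y : Ω → ℝ} {c : ℝ}
    (h : c ≤ minEntropy Y) {v : Ω} (hv : 0 ≤ Y v) : Y v ≤ 2 ^ (-c) := by
  rcases hv.eq_or_lt with h0 | hpos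
  · rw [← h0]; positivity
  have hle : Y v ≤ ⨆ ω, Y ω := le_ciSup (Set.finite_range Y).bddAbove v
  rw [minEntropy] at h
  exact hle.trans ((Real.logb_le_iff_le_rpow one_lt_two (hpos.trans_le hle)).1 (by linarith))

lemma sum_sq_le_of_le_minEntropy {Ω : Type*} [Fintype Ω] {Y : Ω → ℝ} {c : ℝ}
    (hY0 : ∀ v, 0 ≤ Y v) (hY1 : ∑ v, Y v = 1) (h : c ≤ minEntropy Y) :
    ∑ v, Y v ^ 2 ≤ 2 ^ (-c) :=
  calc ∑ v, Y v ^ 2 ≤ ∑ v, 2 ^ (-c) * Y v := sum_le_sum fun v _ => by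
        rw [sq]; exact mul_le_mul_of_nonneg_right (le_rpow_neg_of_le_minEntropy h (hY0 v)) (hY0 v)
    _ = 2 ^ (-c) := by rw [← mul_sum, hY1, mul_one]

lemma sub_le_minEntropy_div_sum {Ω : Type*} [Fintype Ω] {μ : Ω → ℝ} {a c : ℝ}
    (hμ0 : ∀ x, 0 ≤ μ x) (hμ : ∀ x, μ x ≤ 2 ^ (-a)) (hmass : 2 ^ (-c) ≤ ∑ x, μ x) :
    a - c ≤ minEntropy fun x => μ x / ∑ y, μ y := by
  have hpos : 0 < ∑ y, μ y := (by positivity : (0 : ℝ) < 2 ^ (-c)).trans_le hmass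
  refine le_minEntropy_of_forall_le ?_ fun x => ?_
  · obtain ⟨x, -, hx⟩ := exists_ne_zero_of_sum_ne_zero hpos.ne'
    exact ⟨x, div_pos ((hμ0 x).lt_of_ne' hx) hpos⟩
  · calc μ x / ∑ y, μ y ≤ 2 ^ (-a) / 2 ^ (-c) :=
          div_le_div₀ (by positivity) (hμ x) (by positivity) hmass
      _ = 2 ^ (-(a - c)) := by rw [← Real.rpow_sub two_pos]; ring_nf

lemma sum_mul_le_sum_mul_add_SD {Ω : Type*} [Fintype Ω] {p q G : Ω → ℝ}
    (hpq : ∑ ω, p ω = ∑ ω, q ω) (hG0 : ∀ ω, 0 ≤ G ω) (hG1 : ∀ ω, G ω ≤ 1) :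
    ∑ ω, p ω * G ω ≤ ∑ ω, q ω * G ω + SD p q := by
  -- centring `G` at `1 / 2` is free because `p - q` has total mass zero
  have hcentre : ∑ ω, p ω * G ω - ∑ ω, q ω * G ω =
      ∑ ω, (p ω - q ω) * (G ω - 1 / 2) + (∑ ω, p ω - ∑ ω, q ω) / 2 := by
    rw [← sum_sub_distrib, ← sum_sub_distrib, sum_div, ← sum_add_distrib]
    exact sum_congr rfl fun _ _ => by ring
  rw [hpq, sub_self, zero_div, add_zero] at hcentre
  have hterm (ω : Ω) : (p ω - q ω) * (G ω - 1 / 2) ≤ |p ω - q ω| / 2 := by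
    have : |G ω - 1 / 2| ≤ 1 / 2 := abs_le.2 ⟨by linarith [hG0 ω], by linarith [hG1 ω]⟩
    calc (p ω - q ω) * (G ω - 1 / 2) ≤ |p ω - q ω| * |G ω - 1 / 2| := by
          rw [← abs_mul]; exact le_abs_self _
      _ ≤ |p ω - q ω| / 2 := (mul_le_mul_of_nonneg_left this (abs_nonneg _)).trans_eq (by ring)
  have := sum_le_sum fun ω (_ : ω ∈ univ) => hterm ω
  rw [← sum_div, ← SD] at this
  linarith

lemma sum_mul_sum_comp_le_add_SD {Ω U V : Type*} [Fintype Ω] [Fintype U] [Fintype V]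
    [DecidableEq V] (rst : Ω → U → V) (c : ℝ) {X : Ω → ℝ} {Y : V → ℝ}
    (hXY : ∑ x, X x = ∑ v, Y v) {G : U → V → ℝ} (hG0 : ∀ u v, 0 ≤ G u v)
    (hG1 : ∀ u v, G u v ≤ 1) :
    ∑ x, X x * ∑ u, c * G u (rst x u) ≤
      ∑ u, c * ∑ v, Y v * G u v +
        SD (fun uv : U × V => c * ∑ x, if rst x uv.1 = uv.2 then X x else 0)
          (fun uv => c * Y uv.2) := by
  have hjoint : ∑ x, X x * ∑ u, c * G u (rst x u) =
      ∑ uv : U × V, (c * ∑ x, if rst x uv.1 = uv.2 then X x else 0) * G uv.1 uv.2 := by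
    simp only [Fintype.sum_prod_type, mul_sum, sum_mul, ite_mul, zero_mul, mul_ite, mul_zero]
    rw [sum_comm]
    refine sum_congr rfl fun u _ => ?_
    rw [sum_comm]
    refine sum_congr rfl fun x _ => ?_
    rw [sum_ite_eq, if_pos (mem_univ _)]
    ring
  have hmass : ∑ uv : U × V, c * (∑ x, if rst x uv.1 = uv.2 then X x else 0) =
      ∑ uv : U × V, c * Y uv.2 := by
    simp only [Fintype.sum_prod_type, ← mul_sum]
    congr 1
    refine sum_congr rfl fun u _ => ?_
    rw [sum_comm]
    simp only [sum_ite_eq, mem_univ, if_true, hXY]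
  have hY : ∑ uv : U × V, c * Y uv.2 * G uv.1 uv.2 = ∑ u, c * ∑ v, Y v * G u v := by
    simp only [Fintype.sum_prod_type, mul_sum, mul_assoc]
  rw [hjoint, ← hY]
  exact sum_mul_le_sum_mul_add_SD hmass (fun uv => hG0 uv.1 uv.2) fun uv => hG1 uv.1 uv.2

lemma sum_le_mul_sum_add_mul_card {B : Type*} [Fintype B] {q S : B → ℝ} {C t : ℝ}
    (hq : ∀ b, 0 ≤ q b) (hSq : ∀ b, S b ≤ q b) (hC : 0 ≤ C) (ht : 0 ≤ t)
    (hgood : ∀ b, t ≤ q b → S b ≤ C * q b) :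
    ∑ b, S b ≤ C * ∑ b, q b + t * #{b | q b ≠ 0} := by
  rw [← sum_filter_add_sum_filter_not univ (fun b => t ≤ q b)]
  gcongr ?_ + ?_
  · calc ∑ b ∈ univ with t ≤ q b, S b ≤ ∑ b ∈ univ with t ≤ q b, C * q b :=
          sum_le_sum fun b hb => hgood b (mem_filter.1 hb).2
      _ ≤ C * ∑ b, q b := by
          rw [← mul_sum]
          exact mul_le_mul_of_nonneg_left
            (sum_le_sum_of_subset_of_nonneg (filter_subset _ _) fun b _ _ => hq b) hC
  · calc ∑ b ∈ univ with ¬t ≤ q b, S b ≤ ∑ b ∈ univ with ¬t ≤ q b, q b :=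
          sum_le_sum fun b _ => hSq b
      _ = ∑ b, if q b < t then q b else 0 := by simp_rw [sum_filter, not_le]
      _ ≤ ∑ b, if q b ≠ 0 then t else 0 := sum_le_sum fun b _ => by
          split_ifs with hbad hsupp
          · exact hbad.le
          · exact (not_not.1 hsupp).le
          · exact ht
          · exact le_rfl
      _ = t * #{b | q b ≠ 0} := by rw [← sum_filter, sum_const, nsmul_eq_mul, mul_comm]

lemma expect_fin_pi_eq_sum {F : Type*} [Fintype F] {k : ℕ} (f : (Fin k → F) → ℝ) :
    𝔼 m, f m = ∑ m, 1 / (Fintype.card F : ℝ) ^ k * f m := by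
  rw [Fintype.expect_eq_sum_div_card, ← mul_sum, Fintype.card_fun, Fintype.card_fin]
  push_cast
  ring

lemma sum_mul_expect_agreement_le_of_SD_le {Ω V : Type*} [Fintype Ω] [Fintype V] [Nonempty V]
    {r N : ℕ} (rst : Ω → (Fin r → ZMod 2) → Fin N → ZMod 2)
    (g : (Fin r → ZMod 2) → V → (Fin N → ZMod 2) → ZMod 2)
    {X : Ω → ℝ} {Y : (Fin N → ZMod 2) → ℝ} (hX : ∑ x, X x = 1) (hY : ∑ v, Y v = 1) {η : ℝ}
    (hSD : SD (fun uy : (Fin r → ZMod 2) × (Fin N → ZMod 2) =>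
        (1 / 2 ^ r) * ∑ x, if rst x uy.1 = uy.2 then X x else 0)
      (fun uy => (1 / 2 ^ r) * Y uy.2) ≤ η) :
    ∑ x, X x * 𝔼 u, 𝔼 j, agreement (g u j) (rst x u) ≤ 1 / 2 + √(∑ v, Y v ^ 2) / 2 + η := by
  set bound := 1 / 2 + √(∑ v, Y v ^ 2) / 2
  have hGL (u) : ∑ v, Y v * 𝔼 j, agreement (g u j) v ≤ bound := by
    simp_rw [mul_expect]
    rw [← expect_sum_comm]
    exact expect_le univ_nonempty fun j _ => sum_mul_agreement_le (g u j) Y hY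
  have hc : (1 / 2 ^ r : ℝ) = 1 / (Fintype.card (ZMod 2) : ℝ) ^ r := by simp
  calc ∑ x, X x * 𝔼 u, 𝔼 j, agreement (g u j) (rst x u)
      ≤ ∑ u, (1 / 2 ^ r) * ∑ v, Y v * 𝔼 j, agreement (g u j) v + η := by
        simp_rw [expect_fin_pi_eq_sum (F := ZMod 2), ← hc]
        refine (sum_mul_sum_comp_le_add_SD rst _ (hX.trans hY.symm)
          (G := fun u v => 𝔼 j, agreement (g u j) v)
          (fun u v => expect_nonneg fun j _ => agreement_nonneg _ _)
          (fun u v => expect_le univ_nonempty fun j _ => agreement_le_one _ _)).trans ?_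
        exact add_le_add_right hSD _
    _ ≤ ∑ u : Fin r → ZMod 2, (1 / 2 ^ r) * bound + η := by gcongr with u; exact hGL u
    _ = bound + η := by rw [hc, ← expect_fin_pi_eq_sum, Fintype.expect_const]

def IsEntropySampler {α r t : ℕ} (samp : (Fin r → ZMod 2) → {S : Finset (Fin α) // S.card = t})
    (a b η : ℝ) : Prop :=
  ∀ X : (Fin α → ZMod 2) → ℝ, (∀ x, 0 ≤ X x) → (∑ x, X x = 1) → a ≤ minEntropy X →
    ∃ Y : (Fin t → ZMod 2) → ℝ, (∀ y, 0 ≤ Y y) ∧ (∑ y, Y y = 1) ∧ b ≤ minEntropy Y ∧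
      SD (fun uy : (Fin r → ZMod 2) × (Fin t → ZMod 2) =>
          (1 / 2 ^ r) * ∑ x, if restrict x (samp uy.1).1 (samp uy.1).2 = uy.2 then X x else 0)
        (fun uy => (1 / 2 ^ r) * Y uy.2) ≤ η

namespace IsEntropySampler

variable {α r t : ℕ} {V : Type*} [Fintype V] [Nonempty V]
  {samp : (Fin r → ZMod 2) → {S : Finset (Fin α) // S.card = t}} {a b η : ℝ}

lemma sum_mul_expect_agreement_le (hsamp : IsEntropySampler samp a b η)
    {X : (Fin α → ZMod 2) → ℝ} (hX0 : ∀ x, 0 ≤ X x) (hX1 : ∑ x, X x = 1)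
    (hXa : a ≤ minEntropy X) (g : (Fin r → ZMod 2) → V → (Fin t → ZMod 2) → ZMod 2) :
    ∑ x, X x * 𝔼 u, 𝔼 j, agreement (g u j) (restrict x (samp u).1 (samp u).2) ≤
      1 / 2 + 2 ^ (-b / 2) / 2 + η := by
  obtain ⟨Y, hY0, hY1, hYb, hSD⟩ := hsamp X hX0 hX1 hXa
  refine (sum_mul_expect_agreement_le_of_SD_le (fun x u => restrict x (samp u).1 (samp u).2) g
    hX1 hY1 hSD).trans ?_
  have hsqrt : √(2 ^ (-b) : ℝ) = 2 ^ (-b / 2) := by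
    rw [Real.sqrt_eq_rpow, ← Real.rpow_mul zero_le_two]; ring_nf
  gcongr
  exact hsqrt ▸ Real.sqrt_le_sqrt (sum_sq_le_of_le_minEntropy hY0 hY1 hYb)

/-- Conditioning a uniform key on an event of probability at least `2 ^ (a - α)` leaves
min-entropy at least `a`. -/
lemma sum_mul_expect_agreement_le_mul_sum (hsamp : IsEntropySampler samp a b η)
    {μ : (Fin α → ZMod 2) → ℝ} (hμ0 : ∀ x, 0 ≤ μ x) (hμ : ∀ x, μ x ≤ 2 ^ (-(α : ℝ)))
    (hmass : 2 ^ (-(α - a)) ≤ ∑ x, μ x)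
    (g : (Fin r → ZMod 2) → V → (Fin t → ZMod 2) → ZMod 2) :
    ∑ x, μ x * 𝔼 u, 𝔼 j, agreement (g u j) (restrict x (samp u).1 (samp u).2) ≤
      (1 / 2 + 2 ^ (-b / 2) / 2 + η) * ∑ x, μ x := by
  set q := ∑ x, μ x
  have hq : 0 < q := (by positivity : (0 : ℝ) < 2 ^ (-(α - a))).trans_le hmass
  have hXa : a ≤ minEntropy fun x => μ x / q := by
    simpa using sub_le_minEntropy_div_sum hμ0 hμ hmass
  calc ∑ x, μ x * 𝔼 u, 𝔼 j, agreement (g u j) (restrict x (samp u).1 (samp u).2)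
      = (∑ x, μ x / q * 𝔼 u, 𝔼 j, agreement (g u j) (restrict x (samp u).1 (samp u).2)) * q := by
        rw [sum_mul]
        exact sum_congr rfl fun x _ => by field_simp
    _ ≤ _ := by
        gcongr
        exact hsamp.sum_mul_expect_agreement_le (fun x => div_nonneg (hμ0 x) hq.le)
          (by rw [← sum_div, div_self hq.ne']) hXa g

end IsEntropySampler

def bitsOfEquiv {F : Type*} (ℓ k : ℕ) (toF : (Fin ℓ → ZMod 2) ≃ F) :
    (Fin k → F) ≃ (Fin (k * ℓ) → ZMod 2) where
  toFun := bitsOf ℓ k toF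
  invFun := vecOf ℓ k toF
  left_inv m := by funext i; simp [vecOf, bitsOf]
  right_inv y := by
    funext j
    simp only [vecOf, bitsOf, Equiv.symm_apply_apply, Prod.mk.eta, Equiv.apply_symm_apply]

theorem few_parameters_cannot_learn_general
    (α k ℓ n r₁ r₂ β : ℕ) (η : ℝ) (hη : 0 ≤ η)
    (F : Type*) [Field F] [Fintype F]
    (a : Fin n → F)
    (toF : (Fin ℓ → ZMod 2) ≃ F)
    (samp₁ : (Fin r₁ → ZMod 2) → {S : Finset (Fin α) // S.card = k * ℓ})
    (hsamp₁ : ∀ X : (Fin α → ZMod 2) → ℝ, (∀ x, 0 ≤ X x) → (∑ x, X x = 1) →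
      (α : ℝ) / 4 ≤ minEntropy X →
      ∃ Y : (Fin (k * ℓ) → ZMod 2) → ℝ, (∀ y, 0 ≤ Y y) ∧ (∑ y, Y y = 1) ∧
        (k * ℓ : ℝ) / 5 ≤ minEntropy Y ∧
        SD (fun uy : (Fin r₁ → ZMod 2) × (Fin (k * ℓ) → ZMod 2) =>
              (1 / 2 ^ r₁) *
                ∑ x, if restrict x (samp₁ uy.1).1 (samp₁ uy.1).2 = uy.2 then X x else 0)
          (fun uy => (1 / 2 ^ r₁) * Y uy.2) ≤ η)
    (Q : Fin β → ZMod 2)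
    (samp₂ : (Fin r₂ → ZMod 2) → {S : Finset (Fin β) // S.card = n * ℓ})
    (T₁ T₂ : Type*)
    (enc₁ : (Fin r₁ → ZMod 2) → T₁)
    (enc₂ : (Fin r₂ → ZMod 2) → T₂)
    (B : Type*) [Fintype B]
    (p : (Fin α → ZMod 2) × B → ℝ)
    (hp0 : ∀ w, 0 ≤ p w) (hp1 : ∑ w, p w = 1)
    (hPunif : ∀ P0 : Fin α → ZMod 2, ∑ b, p (P0, b) = 1 / 2 ^ α)
    (hsupp : (((Finset.univ : Finset B).filter (fun b => (∑ P0, p (P0, b)) ≠ 0)).card : ℝ)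
      ≤ (2 : ℝ) ^ ((α : ℝ) / 2))
    (f : B → T₁ × T₂ × (Fin k → F) × (Fin n → F) → ZMod 2) :
    ∑ w : (Fin α → ZMod 2) × B, ∑ u₁ : Fin r₁ → ZMod 2, ∑ u₂ : Fin r₂ → ZMod 2,
        ∑ m : Fin k → F,
          p w * (1 / 2 ^ r₁) * (1 / 2 ^ r₂) * (1 / (Fintype.card F : ℝ) ^ k) *
            (if f w.2 (enc₁ u₁, enc₂ u₂, m,
                  fun i => rsEnc k n a m i +
                    vecOf ℓ n toF (restrict Q (samp₂ u₂).1 (samp₂ u₂).2) i) =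
                ip (bitsOf ℓ k toF m) (restrict w.1 (samp₁ u₁).1 (samp₁ u₁).2)
              then 1 else 0) ≤
      1 / 2 + (2 : ℝ) ^ (-(α : ℝ) / 4) + η + (2 : ℝ) ^ (-(k * ℓ : ℝ) / 10) := by
  set e := bitsOfEquiv ℓ k toF
  set g : B → (Fin r₁ → ZMod 2) → (Fin r₂ → ZMod 2) → (Fin (k * ℓ) → ZMod 2) → ZMod 2 :=
    fun b u₁ u₂ s => f b (enc₁ u₁, enc₂ u₂, e.symm s, fun i => rsEnc k n a (e.symm s) i +
      vecOf ℓ n toF (restrict Q (samp₂ u₂).1 (samp₂ u₂).2) i)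
  set A := fun b (P : Fin α → ZMod 2) =>
    𝔼 u₁, 𝔼 u₂, agreement (g b u₁ u₂) (restrict P (samp₁ u₁).1 (samp₁ u₁).2)
  have hA1 (b P) : A b P ≤ 1 :=
    expect_le univ_nonempty fun _ _ => expect_le univ_nonempty fun _ _ => agreement_le_one _ _
  have hmarg (P b) : p (P, b) ≤ 2 ^ (-(α : ℝ)) := by
    rw [Real.rpow_neg zero_le_two, Real.rpow_natCast, inv_eq_one_div, ← hPunif P]
    exact single_le_sum (fun b _ => hp0 (P, b)) (mem_univ b)
  calc _ = ∑ b, ∑ P, p (P, b) * A b P := by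
        rw [Fintype.sum_prod_type, sum_comm]
        refine sum_congr rfl fun b _ => sum_congr rfl fun P _ => ?_
        simp only [A, agreement_eq_expect_comp_equiv e, g, Equiv.symm_apply_apply,
          expect_fin_pi_eq_sum, ZMod.card, Nat.cast_ofNat, mul_sum, mul_assoc]
        rfl
    _ ≤ (1 / 2 + 2 ^ (-((k * ℓ : ℝ) / 5) / 2) / 2 + η) * ∑ b, ∑ P, p (P, b) +
          2 ^ (-((α : ℝ) - α / 4)) * #{b | ∑ P, p (P, b) ≠ 0} :=
        sum_le_mul_sum_add_mul_card (fun b => sum_nonneg fun P _ => hp0 _)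
          (fun b => sum_le_sum fun P _ => mul_le_of_le_one_right (hp0 _) (hA1 b P))
          (by positivity) (by positivity) fun b hb =>
          IsEntropySampler.sum_mul_expect_agreement_le_mul_sum hsamp₁ (fun P => hp0 _)
            (hmarg · b) hb (g b)
    _ ≤ _ := by
        have hmass : ∑ b, ∑ P, p (P, b) = 1 := by rw [← hp1, Fintype.sum_prod_type, sum_comm]
        have hbad : (2 : ℝ) ^ (-((α : ℝ) - α / 4)) * #{b | ∑ P, p (P, b) ≠ 0} ≤
            2 ^ (-(α : ℝ) / 4) :=
          calc _ ≤ (2 : ℝ) ^ (-((α : ℝ) - α / 4)) * 2 ^ ((α : ℝ) / 2) := by gcongr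
            _ = _ := by rw [← Real.rpow_add two_pos]; ring_nf
        have hgood : (2 : ℝ) ^ (-((k * ℓ : ℝ) / 5) / 2) = 2 ^ (-(k * ℓ : ℝ) / 10) := by ring_nf
        rw [hmass, hgood]
        linarith [(by positivity : (0 : ℝ) < 2 ^ (-(k * ℓ : ℝ) / 10))]

/-- **Any learner with few parameters fails to learn subsampled inner products.**
`P` is a uniform `α`-bit key; the model `Z` (arbitrary, jointly distributed with `P`) has
support of size at most `2^(α/2)`; an example consists of the instance
`([u₁], [u₂], m, Enc(m) + Q|_{samp₂(u₂)})` with label `⟨m, P|_{samp₁(u₁)}⟩` over 𝔽₂,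
for fresh independent uniform `u₁, u₂, m`.  Under the stated sampler property of `samp₁`,
any family of classifiers `f_z` predicts the label of a fresh example with probability at
most `1/2 + 2^(-α/4) + η + 2^(-kℓ/10)`. -/
theorem few_parameters_cannot_learn
    (α k ℓ n r₁ r₂ β : ℕ) (hkn : k ≤ n) (hn : n ≤ 2 ^ ℓ) (η : ℝ) (hη : 0 ≤ η)
    (F : Type*) [Field F] [Fintype F] [DecidableEq F] (hF : Fintype.card F = 2 ^ ℓ)
    (a : Fin n → F) (ha : Function.Injective a)
    (toF : (Fin ℓ → ZMod 2) ≃ F)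
    (samp₁ : (Fin r₁ → ZMod 2) → {S : Finset (Fin α) // S.card = k * ℓ})
    (hsamp₁ : ∀ X : (Fin α → ZMod 2) → ℝ, (∀ x, 0 ≤ X x) → (∑ x, X x = 1) →
      (α : ℝ) / 4 ≤ minEntropy X →
      ∃ Y : (Fin (k * ℓ) → ZMod 2) → ℝ, (∀ y, 0 ≤ Y y) ∧ (∑ y, Y y = 1) ∧
        (k * ℓ : ℝ) / 5 ≤ minEntropy Y ∧
        SD (fun uy : (Fin r₁ → ZMod 2) × (Fin (k * ℓ) → ZMod 2) =>
              (1 / 2 ^ r₁) *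
                ∑ x, if restrict x (samp₁ uy.1).1 (samp₁ uy.1).2 = uy.2 then X x else 0)
          (fun uy => (1 / 2 ^ r₁) * Y uy.2) ≤ η)
    (Q : Fin β → ZMod 2)
    (samp₂ : (Fin r₂ → ZMod 2) → {S : Finset (Fin β) // S.card = n * ℓ})
    (T₁ T₂ : Type*)
    (enc₁ : (Fin r₁ → ZMod 2) → T₁) (henc₁ : Function.Injective enc₁)
    (enc₂ : (Fin r₂ → ZMod 2) → T₂) (henc₂ : Function.Injective enc₂)
    (B : Type*) [Fintype B]
    (p : (Fin α → ZMod 2) × B → ℝ)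
    (hp0 : ∀ w, 0 ≤ p w) (hp1 : ∑ w, p w = 1)
    (hPunif : ∀ P0 : Fin α → ZMod 2, ∑ b, p (P0, b) = 1 / 2 ^ α)
    (hsupp : (((Finset.univ : Finset B).filter (fun b => (∑ P0, p (P0, b)) ≠ 0)).card : ℝ)
      ≤ (2 : ℝ) ^ ((α : ℝ) / 2))
    (f : B → T₁ × T₂ × (Fin k → F) × (Fin n → F) → ZMod 2) :
    ∑ w : (Fin α → ZMod 2) × B, ∑ u₁ : Fin r₁ → ZMod 2, ∑ u₂ : Fin r₂ → ZMod 2,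
        ∑ m : Fin k → F,
          p w * (1 / 2 ^ r₁) * (1 / 2 ^ r₂) * (1 / (Fintype.card F : ℝ) ^ k) *
            (if f w.2 (enc₁ u₁, enc₂ u₂, m,
                  fun i => rsEnc k n a m i +
                    vecOf ℓ n toF (restrict Q (samp₂ u₂).1 (samp₂ u₂).2) i) =
                ip (bitsOf ℓ k toF m) (restrict w.1 (samp₁ u₁).1 (samp₁ u₁).2)
              then 1 else 0) ≤
      1 / 2 + (2 : ℝ) ^ (-(α : ℝ) / 4) + η + (2 : ℝ) ^ (-(k * ℓ : ℝ) / 10) :=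
  few_parameters_cannot_learn_general α k ℓ n r₁ r₂ β η hη F a toF samp₁ hsamp₁ Q samp₂ T₁ T₂ enc₁
    enc₂ B p hp0 hp1 hPunif hsupp f
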